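/- (Theorem 1, Hellinger part.) Let r > 0, W > 0, and let (y_{1,1},…,y_{1,n}) and (y_{2,1},…,y_{2,n}) be two datasets in Y^n with max_i ‖y_{1,i}‖ < r and max_i ‖y_{2,i}‖ < r. Under Assumptions 1–2, there exist constants a, b > 0 depending only on the prior ρ0 and on r such that the Gibbs posteriors ρ̂_{n,1}^W and ρ̂_{n,2}^W built from the two datasets satisfy d_H²(ρ̂_{n,1}^W, ρ̂_{n,2}^W) ≤ sqrt( 1 − exp{ −a W (1 + e^{bnW})² ∑_{i=1}^n ‖y_{1,i} − y_{2,i}‖ } ). -/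

import Mathlib

open MeasureTheory Real Filter Topology
open scoped ENNReal NNReal

noncomputable section

abbrev Par (p : ℕ) := EuclideanSpace ℝ (Fin p)
abbrev Obs (d : ℕ) := EuclideanSpace ℝ (Fin d)

open scoped Classical in
/-- Kullback–Leibler divergence; `⊤` if `μ` is not absolutely continuous w.r.t. `ν`
or the log-density is not integrable. -/
noncomputable def klDiv {α : Type*} [MeasurableSpace α] (μ ν : Measure α) : EReal :=
  if μ ≪ ν ∧ Integrable (fun x => Real.log (μ.rnDeriv ν x).toReal) μ
  then ((∫ x, Real.log (μ.rnDeriv ν x).toReal ∂μ : ℝ) : EReal)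
  else ⊤

/-- Squared Hellinger distance. -/
noncomputable def hellingerSq {α : Type*} [MeasurableSpace α] (μ ν : Measure α) : ℝ :=
  (1 / 2) * ∫ x, (Real.sqrt ((μ.rnDeriv (μ + ν) x).toReal)
      - Real.sqrt ((ν.rnDeriv (μ + ν) x).toReal)) ^ 2 ∂(μ + ν)

/-- Empirical risk `R_n`. -/
noncomputable def empRisk {p d n : ℕ} (L : Par p → Obs d → ℝ) (ys : Fin n → Obs d)
    (θ : Par p) : ℝ :=
  (1 / (n : ℝ)) * ∑ i, L θ (ys i)

/-- Partition function `Z_n^W`. -/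
noncomputable def partition {p d n : ℕ} (ρ0 : Measure (Par p)) (L : Par p → Obs d → ℝ)
    (ys : Fin n → Obs d) (W : ℝ) : ℝ :=
  ∫ θ, Real.exp (-(n * W) * empRisk L ys θ) ∂ρ0

/-- Gibbs posterior `ρ̂_n^W`. -/
noncomputable def gibbs {p d n : ℕ} (ρ0 : Measure (Par p)) (L : Par p → Obs d → ℝ)
    (ys : Fin n → Obs d) (W : ℝ) : Measure (Par p) :=
  ρ0.withDensity
    (fun θ => ENNReal.ofReal (Real.exp (-(n * W) * empRisk L ys θ) / partition ρ0 L ys W))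

/-- Assumption 1 on the loss. -/
structure Assumption1 {p d : ℕ} (ρ0 : Measure (Par p)) (P : Measure (Obs d))
    (L : Par p → Obs d → ℝ) : Prop where
  measurable : Measurable (Function.uncurry L)
  nonneg : ∀ θ y, 0 ≤ L θ y
  dominated : ∃ K : Par p × Obs d → ℝ, Integrable K (ρ0.prod P) ∧ ∀ θ y, L θ y ≤ K (θ, y)
  lipschitz_param : ∀ r > 0, ∃ C1 : Obs d → ℝ, (∀ y, 0 ≤ C1 y) ∧ Integrable C1 P ∧
    ∀ θ1 θ2 y, ‖θ1‖ < r → ‖θ2‖ < r → |L θ1 y - L θ2 y| ≤ C1 y * ‖θ1 - θ2‖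
  lipschitz_data : ∀ r > 0, ∃ C2 : Par p → ℝ, (∀ θ, 0 ≤ C2 θ) ∧
    Integrable (fun θ => Real.exp (C2 θ)) ρ0 ∧
    ∀ θ y1 y2, ‖y1‖ < r → ‖y2‖ < r → |L θ y1 - L θ y2| ≤ C2 θ * ‖y1 - y2‖

/-- Assumption 2 on the prior: everywhere-positive, locally log-Lipschitz Lebesgue density. -/
structure Assumption2 {p : ℕ} (ρ0 : Measure (Par p)) (f : Par p → ℝ) : Prop where
  density : ρ0 = volume.withDensity (fun θ => ENNReal.ofReal (f θ))
  pos : ∀ θ, 0 < f θ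
  logLip : ∀ r > 0, ∃ C3 : ℝ, ∀ θ1 θ2, ‖θ1‖ < r → ‖θ2‖ < r →
    |Real.log (f θ1) - Real.log (f θ2)| ≤ C3 * ‖θ1 - θ2‖


/-!
For Gibbs densities `gᵢ ∝ exp (-uᵢ)` with respect to a prior `ρ0`, the squared Hellinger distance
is `1 - ∫ √(g₁ g₂) dρ0`, and `√(g₁ g₂) = exp h · g₁` for an explicit `h` built from `u₁ - u₂` and
the log-partition functions. Jensen's inequality for the probability density `g₁` bounds the
Bhattacharyya coefficient `∫ exp h · g₁` below by `exp (∫ h g₁)`. If `|u₁ - u₂| ≤ c` with `c`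
integrable, both `∫ (u₁ - u₂) g₁` and `log Z₁ - log Z₂` are at least `-(∫ c) / Z₁`, since
`g₁ ≤ 1 / Z₁` and `x ↦ exp (-x)` is `1`-Lipschitz on `[0, ∞)`. For the Gibbs posteriors,
`c = W (∑ᵢ ‖y₁ᵢ - y₂ᵢ‖) C` with `C` the data-Lipschitz constant of the loss, and the partition
function is at least `δ exp (-B n W)`, where `δ > 0` is the prior mass of a set on which the loss
is bounded by `B` uniformly over the data ball of radius `r`.
-/

variable {α : Type*} [MeasurableSpace α]

lemma exp_neg_sub_exp_neg_le_abs {u v : ℝ} (hv : 0 ≤ v) : exp (-v) - exp (-u) ≤ |u - v| := by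
  have htangent : 1 - exp (v - u) ≤ u - v := by linarith [add_one_le_exp (v - u)]
  calc exp (-v) - exp (-u) = exp (-v) * (1 - exp (v - u)) := by
        rw [mul_sub, ← exp_add]; ring_nf
    _ ≤ exp (-v) * |u - v| :=
        mul_le_mul_of_nonneg_left (htangent.trans (le_abs_self _)) (exp_pos _).le
    _ ≤ |u - v| := mul_le_of_le_one_left (abs_nonneg _) (exp_le_one_iff.mpr (by linarith))

lemma one_sub_exp_neg_le_sqrt_one_sub_exp_neg {K x : ℝ} (hK : 0 ≤ K) (hx : 2 * K ≤ x) :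
    1 - exp (-K) ≤ √(1 - exp (-x)) := by
  have hexp : exp (-x) ≤ exp (-K) * exp (-K) := by
    rw [← exp_add]; exact exp_le_exp.mpr (by linarith)
  have hK1 : exp (-K) ≤ 1 := exp_le_one_iff.mpr (by linarith)
  exact Real.le_sqrt_of_sq_le (by nlinarith [exp_pos (-K)])

lemma sqrt_mul_le_add {a b : ℝ} (ha : 0 ≤ a) (hb : 0 ≤ b) : √(a * b) ≤ a + b :=
  Real.sqrt_le_iff.mpr ⟨by positivity, by nlinarith⟩

lemma div_le_mul_one_add_exp_sq_div {δ E Z x : ℝ} (hδ : 0 < δ) (hx : 0 ≤ x)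
    (hZ : δ * exp (-E) ≤ Z) : x / Z ≤ x * (1 + exp E) ^ 2 / δ := by
  have hexp : exp E ≤ (1 + exp E) ^ 2 := by nlinarith [exp_pos E]
  calc x / Z ≤ x / (δ * exp (-E)) := div_le_div_of_nonneg_left hx (by positivity) hZ
    _ = x * exp E / δ := by rw [exp_neg]; field_simp
    _ ≤ x * (1 + exp E) ^ 2 / δ := by gcongr

lemma MeasureTheory.Integrable.sqrt_mul {μ : Measure α} {f g : α → ℝ} (hf : Integrable f μ)
    (hg : Integrable g μ) (hf0 : ∀ x, 0 ≤ f x) (hg0 : ∀ x, 0 ≤ g x) :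
    Integrable (fun x => √(f x * g x)) μ :=
  (hf.add hg).mono' (Real.continuous_sqrt.comp_aestronglyMeasurable (hf.1.mul hg.1))
    (ae_of_all _ fun x => by
      rw [Real.norm_of_nonneg (Real.sqrt_nonneg _)]; exact sqrt_mul_le_add (hf0 x) (hg0 x))

lemma integrable_exp_neg_of_nonneg {μ : Measure α} [IsFiniteMeasure μ] {u : α → ℝ}
    (hu : Measurable u) (hu0 : ∀ x, 0 ≤ u x) : Integrable (fun x => exp (-u x)) μ :=
  Integrable.of_bound hu.neg.exp.aestronglyMeasurable 1 (ae_of_all _ fun x => by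
    rw [Real.norm_of_nonneg (exp_pos _).le]; exact exp_le_one_iff.mpr (by linarith [hu0 x]))

lemma measureReal_mul_exp_neg_le_integral_exp_neg {μ : Measure α} [IsFiniteMeasure μ]
    {u : α → ℝ} {E : Set α} {B : ℝ} (hu : Integrable (fun x => exp (-u x)) μ)
    (hE : MeasurableSet E) (hB : ∀ᵐ x ∂μ, x ∈ E → u x ≤ B) :
    μ.real E * exp (-B) ≤ ∫ x, exp (-u x) ∂μ := by
  calc μ.real E * exp (-B) = ∫ _ in E, exp (-B) ∂μ := by rw [setIntegral_const, smul_eq_mul]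
    _ ≤ ∫ x in E, exp (-u x) ∂μ :=
        setIntegral_mono_on_ae (integrableOn_const (measure_ne_top _ _)) hu.integrableOn hE
          (hB.mono fun x hx hxE => exp_le_exp.mpr (neg_le_neg (hx hxE)))
    _ ≤ ∫ x, exp (-u x) ∂μ := setIntegral_le_integral hu (ae_of_all _ fun x => (exp_pos _).le)

lemma exp_integral_mul_le_integral_exp_mul {μ : Measure α} {g h : α → ℝ} (hg : 0 ≤ᵐ[μ] g)
    (hgi : Integrable g μ) (hg1 : ∫ x, g x ∂μ = 1) (hhg : Integrable (fun x => h x * g x) μ)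
    (hehg : Integrable (fun x => exp (h x) * g x) μ) :
    exp (∫ x, h x * g x ∂μ) ≤ ∫ x, exp (h x) * g x ∂μ := by
  set J := ∫ x, h x * g x ∂μ
  have htangent : ∀ x, exp J * (h x - J + 1) ≤ exp (h x) := fun x => by
    have := add_one_le_exp (h x - J)
    rwa [exp_sub, le_div_iff₀' (exp_pos J)] at this
  calc exp J = ∫ x, exp J * ((1 - J) * g x + h x * g x) ∂μ := by
        rw [integral_const_mul, integral_add (hgi.const_mul _) hhg, integral_const_mul, hg1]
        ring
    _ ≤ ∫ x, exp (h x) * g x ∂μ := by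
        refine integral_mono_ae (((hgi.const_mul _).add hhg).const_mul _) hehg ?_
        filter_upwards [hg] with x hx
        calc exp J * ((1 - J) * g x + h x * g x) = exp J * (h x - J + 1) * g x := by ring
          _ ≤ exp (h x) * g x := mul_le_mul_of_nonneg_right (htangent x) hx

lemma rnDeriv_withDensity_add_withDensity {ρ : Measure α} {G₁ G₂ : α → ℝ≥0∞}
    (hG₁ : Measurable G₁) (hG₂ : Measurable G₂) (h_ne_top : ∀ x, G₁ x + G₂ x ≠ ∞)
    [SigmaFinite (ρ.withDensity G₁ + ρ.withDensity G₂)] :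
    (ρ.withDensity G₁).rnDeriv (ρ.withDensity G₁ + ρ.withDensity G₂)
      =ᵐ[ρ.withDensity G₁ + ρ.withDensity G₂] fun x => G₁ x / (G₁ x + G₂ x) := by
  have hdiv : Measurable fun x => G₁ x / (G₁ x + G₂ x) := hG₁.div (hG₁.add hG₂)
  have hG₁_eq : (ρ.withDensity G₁ + ρ.withDensity G₂).withDensity (fun x => G₁ x / (G₁ x + G₂ x))
      = ρ.withDensity G₁ := by
    rw [← withDensity_add_left hG₁, ← withDensity_mul _ (hG₁.add hG₂) hdiv]
    congr 1
    funext x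
    exact ENNReal.mul_div_cancel' (fun h => (add_eq_zero.mp h).1)
      (fun h => absurd h (h_ne_top x))
  have h := Measure.rnDeriv_withDensity (ρ.withDensity G₁ + ρ.withDensity G₂) hdiv
  rwa [hG₁_eq] at h

lemma toReal_ofReal_div_ofReal_add {a b : ℝ} (ha : 0 ≤ a) (hb : 0 ≤ b) :
    (ENNReal.ofReal a / (ENNReal.ofReal a + ENNReal.ofReal b)).toReal = a / (a + b) := by
  rw [ENNReal.toReal_div, ← ENNReal.ofReal_add ha hb, ENNReal.toReal_ofReal ha,
    ENNReal.toReal_ofReal (add_nonneg ha hb)]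

lemma mul_sqrt_div_sub_sqrt_div_sq {a b : ℝ} (ha : 0 ≤ a) (hb : 0 ≤ b) :
    (a + b) * (√(a / (a + b)) - √(b / (a + b))) ^ 2 = a + b - 2 * √(a * b) := by
  rcases (add_nonneg ha hb).eq_or_lt with hab | hab
  · obtain ⟨rfl, rfl⟩ : a = 0 ∧ b = 0 := ⟨by linarith, by linarith⟩
    simp
  rw [Real.sqrt_div ha, Real.sqrt_div hb, div_sub_div_same, div_pow, Real.sq_sqrt hab.le,
    mul_div_cancel₀ _ hab.ne', sub_sq, Real.sq_sqrt ha, Real.sq_sqrt hb, Real.sqrt_mul ha]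
  ring

theorem hellingerSq_withDensity_ofReal {ρ : Measure α} {g₁ g₂ : α → ℝ}
    (hg₁ : Measurable g₁) (hg₂ : Measurable g₂) (h₁ : ∀ x, 0 ≤ g₁ x) (h₂ : ∀ x, 0 ≤ g₂ x)
    (hi₁ : Integrable g₁ ρ) (hi₂ : Integrable g₂ ρ)
    (hint₁ : ∫ x, g₁ x ∂ρ = 1) (hint₂ : ∫ x, g₂ x ∂ρ = 1) :
    hellingerSq (ρ.withDensity fun x => ENNReal.ofReal (g₁ x))
      (ρ.withDensity fun x => ENNReal.ofReal (g₂ x)) = 1 - ∫ x, √(g₁ x * g₂ x) ∂ρ := by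
  set G₁ : α → ℝ≥0∞ := fun x => ENNReal.ofReal (g₁ x)
  set G₂ : α → ℝ≥0∞ := fun x => ENNReal.ofReal (g₂ x)
  have : IsFiniteMeasure (ρ.withDensity G₁) := isFiniteMeasure_withDensity_ofReal hi₁.2
  have : IsFiniteMeasure (ρ.withDensity G₂) := isFiniteMeasure_withDensity_ofReal hi₂.2
  have h_ne_top : ∀ x, G₁ x + G₂ x ≠ ∞ := fun x => by simp [G₁, G₂]
  have hrn₁ := rnDeriv_withDensity_add_withDensity (ρ := ρ) hg₁.ennreal_ofReal
    hg₂.ennreal_ofReal h_ne_top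
  have hrn₂ := rnDeriv_withDensity_add_withDensity (ρ := ρ) hg₂.ennreal_ofReal
    hg₁.ennreal_ofReal fun x => add_comm (G₁ x) (G₂ x) ▸ h_ne_top x
  rw [add_comm (ρ.withDensity G₂)] at hrn₂
  have hsum : ρ.withDensity G₁ + ρ.withDensity G₂
      = ρ.withDensity fun x => ((g₁ x + g₂ x).toNNReal : ℝ≥0∞) := by
    rw [← withDensity_add_left hg₁.ennreal_ofReal]
    congr 1
    funext x
    exact (ENNReal.ofReal_add (h₁ x) (h₂ x)).symm
  have hpoint : ∀ x, (g₁ x + g₂ x).toNNReal • (√((G₁ x / (G₁ x + G₂ x)).toReal)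
      - √((G₂ x / (G₂ x + G₁ x)).toReal)) ^ 2 = g₁ x + g₂ x - 2 * √(g₁ x * g₂ x) := fun x => by
    rw [NNReal.smul_def, smul_eq_mul, Real.coe_toNNReal _ (add_nonneg (h₁ x) (h₂ x)),
      toReal_ofReal_div_ofReal_add (h₁ x) (h₂ x), toReal_ofReal_div_ofReal_add (h₂ x) (h₁ x),
      add_comm (g₂ x), mul_sqrt_div_sub_sqrt_div_sq (h₁ x) (h₂ x)]
  rw [hellingerSq, integral_congr_ae (hrn₁.mp (hrn₂.mono fun x hx₂ hx₁ => by rw [hx₁, hx₂]))]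
  beta_reduce
  rw [hsum, integral_withDensity_eq_integral_smul (f := fun x => (g₁ x + g₂ x).toNNReal)
      (hg₁.add hg₂).real_toNNReal,
    integral_congr_ae (ae_of_all _ hpoint),
    integral_sub (f := fun x => g₁ x + g₂ x) (hi₁.add hi₂) ((hi₁.sqrt_mul hi₂ h₁ h₂).const_mul 2),
    integral_add hi₁ hi₂, integral_const_mul, hint₁, hint₂]
  ring

def gibbsDensity (μ : Measure α) (u : α → ℝ) (x : α) : ℝ :=
  exp (-u x) / ∫ y, exp (-u y) ∂μ

section GibbsDensity

variable {μ : Measure α} {u : α → ℝ}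

lemma measurable_gibbsDensity (hu : Measurable u) : Measurable (gibbsDensity μ u) :=
  hu.neg.exp.div_const _

variable [IsFiniteMeasure μ]

lemma integrable_gibbsDensity (hu : Measurable u) (hu0 : ∀ x, 0 ≤ u x) :
    Integrable (gibbsDensity μ u) μ :=
  (integrable_exp_neg_of_nonneg hu hu0).div_const _

variable [NeZero μ]

lemma integral_exp_neg_pos (hu : Measurable u) (hu0 : ∀ x, 0 ≤ u x) :
    0 < ∫ x, exp (-u x) ∂μ :=
  integral_exp_pos (integrable_exp_neg_of_nonneg hu hu0)

lemma gibbsDensity_pos (hu : Measurable u) (hu0 : ∀ x, 0 ≤ u x) (x : α) :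
    0 < gibbsDensity μ u x :=
  div_pos (exp_pos _) (integral_exp_neg_pos hu hu0)

lemma gibbsDensity_le_inv (hu : Measurable u) (hu0 : ∀ x, 0 ≤ u x) (x : α) :
    gibbsDensity μ u x ≤ (∫ y, exp (-u y) ∂μ)⁻¹ := by
  rw [gibbsDensity, div_eq_mul_inv]
  exact mul_le_of_le_one_left (inv_pos.mpr (integral_exp_neg_pos hu hu0)).le
    (exp_le_one_iff.mpr (by linarith [hu0 x]))

lemma integral_gibbsDensity (hu : Measurable u) (hu0 : ∀ x, 0 ≤ u x) :
    ∫ x, gibbsDensity μ u x ∂μ = 1 :=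
  (integral_div _ _).trans (div_self (integral_exp_neg_pos hu hu0).ne')

lemma gibbsDensity_eq_exp (hu : Measurable u) (hu0 : ∀ x, 0 ≤ u x) (x : α) :
    gibbsDensity μ u x = exp (-u x - log (∫ y, exp (-u y) ∂μ)) := by
  rw [gibbsDensity, exp_sub, exp_log (integral_exp_neg_pos hu hu0)]

lemma sqrt_gibbsDensity_mul_gibbsDensity {v : α → ℝ} (hu : Measurable u) (hu0 : ∀ x, 0 ≤ u x)
    (hv : Measurable v) (hv0 : ∀ x, 0 ≤ v x) (x : α) :
    √(gibbsDensity μ u x * gibbsDensity μ v x)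
      = exp ((u x - v x + (log (∫ y, exp (-u y) ∂μ) - log (∫ y, exp (-v y) ∂μ))) / 2)
        * gibbsDensity μ u x := by
  rw [gibbsDensity_eq_exp hu hu0, gibbsDensity_eq_exp hv hv0, ← exp_add, ← exp_add, ← exp_half]
  ring_nf

lemma log_integral_exp_neg_sub_log_le {v c : α → ℝ} (hu : Measurable u) (hu0 : ∀ x, 0 ≤ u x)
    (hv : Measurable v) (hv0 : ∀ x, 0 ≤ v x) (hc : Integrable c μ)
    (huv : ∀ᵐ x ∂μ, |u x - v x| ≤ c x) :
    log (∫ x, exp (-v x) ∂μ) - log (∫ x, exp (-u x) ∂μ)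
      ≤ (∫ x, c x ∂μ) / ∫ x, exp (-u x) ∂μ := by
  have hZ₁ := integral_exp_neg_pos (μ := μ) hu hu0
  have hZ₂ := integral_exp_neg_pos (μ := μ) hv hv0
  have hZ : (∫ x, exp (-v x) ∂μ) - ∫ x, exp (-u x) ∂μ ≤ ∫ x, c x ∂μ := by
    rw [← integral_sub (integrable_exp_neg_of_nonneg hv hv0) (integrable_exp_neg_of_nonneg hu hu0)]
    exact integral_mono_ae ((integrable_exp_neg_of_nonneg hv hv0).sub
      (integrable_exp_neg_of_nonneg hu hu0)) hc
      (huv.mono fun x hx => (exp_neg_sub_exp_neg_le_abs (hv0 x)).trans hx)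
  have hlog := log_le_sub_one_of_pos (div_pos hZ₂ hZ₁)
  rw [log_div hZ₂.ne' hZ₁.ne', div_sub_one hZ₁.ne'] at hlog
  exact hlog.trans (div_le_div_of_nonneg_right hZ hZ₁.le)

lemma abs_sub_mul_gibbsDensity_le {v c : α → ℝ} (hu : Measurable u) (hu0 : ∀ x, 0 ≤ u x)
    (huv : ∀ᵐ x ∂μ, |u x - v x| ≤ c x) :
    ∀ᵐ x ∂μ, |(u x - v x) * gibbsDensity μ u x| ≤ c x / ∫ x, exp (-u x) ∂μ := by
  filter_upwards [huv] with x hx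
  rw [abs_mul, abs_of_pos (gibbsDensity_pos hu hu0 x), div_eq_mul_inv]
  exact mul_le_mul hx (gibbsDensity_le_inv hu hu0 x) (gibbsDensity_pos hu hu0 x).le
    ((abs_nonneg _).trans hx)

theorem exp_neg_le_integral_sqrt_gibbsDensity_mul {v c : α → ℝ} (hu : Measurable u)
    (hu0 : ∀ x, 0 ≤ u x) (hv : Measurable v) (hv0 : ∀ x, 0 ≤ v x) (hc : Integrable c μ)
    (huv : ∀ᵐ x ∂μ, |u x - v x| ≤ c x) :
    exp (-((∫ x, c x ∂μ) / ∫ x, exp (-u x) ∂μ))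
      ≤ ∫ x, √(gibbsDensity μ u x * gibbsDensity μ v x) ∂μ := by
  set Z₁ := ∫ x, exp (-u x) ∂μ
  set Z₂ := ∫ x, exp (-v x) ∂μ
  set K := (∫ x, c x ∂μ) / Z₁
  have hg := gibbsDensity_pos (μ := μ) hu hu0
  have hlog : -K ≤ log Z₁ - log Z₂ := by
    linarith [log_integral_exp_neg_sub_log_le hu hu0 hv hv0 hc huv]
  have hbound := abs_sub_mul_gibbsDensity_le hu hu0 huv
  have hint : Integrable (fun x => (u x - v x) * gibbsDensity μ u x) μ :=
    (hc.div_const Z₁).mono' ((hu.sub hv).mul (measurable_gibbsDensity hu)).aestronglyMeasurable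
      hbound
  have hcross : -K ≤ ∫ x, (u x - v x) * gibbsDensity μ u x ∂μ := by
    rw [show -K = ∫ x, -(c x / Z₁) ∂μ by rw [integral_neg, integral_div]]
    exact integral_mono_ae (hc.div_const Z₁).neg hint
      (hbound.mono fun x hx => neg_le_of_abs_le hx)
  have hsplit : ∀ x, (u x - v x + (log Z₁ - log Z₂)) / 2 * gibbsDensity μ u x
      = ((u x - v x) * gibbsDensity μ u x + (log Z₁ - log Z₂) * gibbsDensity μ u x) / 2 :=
    fun x => by ring
  have hint_const := (integrable_gibbsDensity (μ := μ) hu hu0).const_mul (log Z₁ - log Z₂)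
  have hJ : ∫ x, (u x - v x + (log Z₁ - log Z₂)) / 2 * gibbsDensity μ u x ∂μ
      = ((∫ x, (u x - v x) * gibbsDensity μ u x ∂μ) + (log Z₁ - log Z₂)) / 2 := by
    simp_rw [hsplit]
    rw [integral_div, integral_add hint hint_const, integral_const_mul,
      integral_gibbsDensity hu hu0, mul_one]
  have hsqrt : ∀ x, √(gibbsDensity μ u x * gibbsDensity μ v x)
      = exp ((u x - v x + (log Z₁ - log Z₂)) / 2) * gibbsDensity μ u x :=
    sqrt_gibbsDensity_mul_gibbsDensity hu hu0 hv hv0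
  have hsqrt_int : Integrable (fun x => √(gibbsDensity μ u x * gibbsDensity μ v x)) μ :=
    (integrable_gibbsDensity hu hu0).sqrt_mul (integrable_gibbsDensity hv hv0)
      (fun x => (hg x).le) (fun x => (gibbsDensity_pos hv hv0 x).le)
  simp_rw [hsqrt] at hsqrt_int ⊢
  calc exp (-K) ≤ exp (∫ x, (u x - v x + (log Z₁ - log Z₂)) / 2 * gibbsDensity μ u x ∂μ) :=
        exp_le_exp.mpr (by rw [hJ]; linarith)
    _ ≤ _ := exp_integral_mul_le_integral_exp_mul (ae_of_all _ fun x => (hg x).le)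
        (integrable_gibbsDensity hu hu0) (integral_gibbsDensity hu hu0)
        (by simp_rw [hsplit]; exact (hint.add hint_const).div_const 2) hsqrt_int

theorem hellingerSq_withDensity_gibbsDensity_le {v c : α → ℝ} (hu : Measurable u)
    (hu0 : ∀ x, 0 ≤ u x) (hv : Measurable v) (hv0 : ∀ x, 0 ≤ v x) (hc : Integrable c μ)
    (huv : ∀ᵐ x ∂μ, |u x - v x| ≤ c x) :
    hellingerSq (μ.withDensity fun x => ENNReal.ofReal (gibbsDensity μ u x))
        (μ.withDensity fun x => ENNReal.ofReal (gibbsDensity μ v x))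
      ≤ 1 - exp (-((∫ x, c x ∂μ) / ∫ x, exp (-u x) ∂μ)) := by
  rw [hellingerSq_withDensity_ofReal (measurable_gibbsDensity hu) (measurable_gibbsDensity hv)
    (fun x => (gibbsDensity_pos hu hu0 x).le) (fun x => (gibbsDensity_pos hv hv0 x).le)
    (integrable_gibbsDensity hu hu0) (integrable_gibbsDensity hv hv0)
    (integral_gibbsDensity hu hu0) (integral_gibbsDensity hv hv0)]
  linarith [exp_neg_le_integral_sqrt_gibbsDensity_mul hu hu0 hv hv0 hc huv]

end GibbsDensity

lemma neg_mul_empRisk {p d n : ℕ} (L : Par p → Obs d → ℝ) (ys : Fin n → Obs d) (W : ℝ)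
    (θ : Par p) : -(n * W) * empRisk L ys θ = -(W * ∑ i, L θ (ys i)) := by
  rcases Nat.eq_zero_or_pos n with rfl | hn
  · simp
  · rw [empRisk]
    field_simp

lemma partition_eq_integral {p d n : ℕ} (ρ0 : Measure (Par p)) (L : Par p → Obs d → ℝ)
    (ys : Fin n → Obs d) (W : ℝ) :
    partition ρ0 L ys W = ∫ θ, exp (-(W * ∑ i, L θ (ys i))) ∂ρ0 := by
  simp only [partition, neg_mul_empRisk]

lemma gibbs_eq_withDensity_gibbsDensity {p d n : ℕ} (ρ0 : Measure (Par p))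
    (L : Par p → Obs d → ℝ) (ys : Fin n → Obs d) (W : ℝ) :
    gibbs ρ0 L ys W = ρ0.withDensity fun θ =>
      ENNReal.ofReal (gibbsDensity ρ0 (fun θ => W * ∑ i, L θ (ys i)) θ) := by
  simp only [gibbs, partition_eq_integral, gibbsDensity, neg_mul_empRisk]

lemma abs_sum_sub_sum_le_mul_sum {E : Type*} [SeminormedAddCommGroup E] {n : ℕ} {ℓ : E → ℝ}
    {C r : ℝ} (hℓ : ∀ y₁ y₂, ‖y₁‖ < r → ‖y₂‖ < r → |ℓ y₁ - ℓ y₂| ≤ C * ‖y₁ - y₂‖)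
    {ys₁ ys₂ : Fin n → E} (hy₁ : ∀ i, ‖ys₁ i‖ < r) (hy₂ : ∀ i, ‖ys₂ i‖ < r) :
    |∑ i, ℓ (ys₁ i) - ∑ i, ℓ (ys₂ i)| ≤ C * ∑ i, ‖ys₁ i - ys₂ i‖ := by
  rw [← Finset.sum_sub_distrib, Finset.mul_sum]
  exact (Finset.abs_sum_le_sum_abs _ _).trans
    (Finset.sum_le_sum fun i _ => hℓ _ _ (hy₁ i) (hy₂ i))

namespace Assumption1

variable {p d : ℕ} {ρ0 : Measure (Par p)} {P : Measure (Obs d)} {L : Par p → Obs d → ℝ}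
  {r : ℝ}

lemma measurable_sum {n : ℕ} (hL : Assumption1 ρ0 P L) (ys : Fin n → Obs d) :
    Measurable fun θ => ∑ i, L θ (ys i) :=
  Finset.measurable_sum _ fun _ _ => hL.measurable.comp (measurable_id.prodMk measurable_const)

lemma exists_integrable_lipschitz_data (hL : Assumption1 ρ0 P L) (hr : 0 < r) :
    ∃ C : Par p → ℝ, Measurable C ∧ Integrable C ρ0 ∧ ∀ᵐ θ ∂ρ0, 0 ≤ C θ ∧
      ∀ y₁ y₂, ‖y₁‖ < r → ‖y₂‖ < r → |L θ y₁ - L θ y₂| ≤ C θ * ‖y₁ - y₂‖ := by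
  obtain ⟨C, hC0, hexp, hC⟩ := hL.lipschitz_data r hr
  have hCm : AEMeasurable C ρ0 := by simpa only [log_exp] using hexp.aemeasurable.log
  have hCi : Integrable C ρ0 := hexp.mono hCm.aestronglyMeasurable (ae_of_all _ fun θ => by
    rw [Real.norm_of_nonneg (hC0 θ), Real.norm_of_nonneg (exp_pos _).le]
    linarith [add_one_le_exp (C θ)])
  refine ⟨hCm.mk C, hCm.measurable_mk, hCi.congr hCm.ae_eq_mk, ?_⟩
  filter_upwards [hCm.ae_eq_mk] with θ hθ
  exact hθ ▸ ⟨hC0 θ, hC θ⟩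

lemma exists_pos_measure_loss_le [NeZero ρ0] (hL : Assumption1 ρ0 P L) (hr : 0 < r) :
    ∃ E, MeasurableSet E ∧ 0 < ρ0 E ∧ ∃ B > 0,
      ∀ᵐ θ ∂ρ0, θ ∈ E → ∀ y, ‖y‖ < r → L θ y ≤ B := by
  obtain ⟨C, hCm, -, hC⟩ := hL.exists_integrable_lipschitz_data hr
  have hF : Measurable fun θ => L θ 0 + r * C θ :=
    (hL.measurable.comp (measurable_id.prodMk measurable_const)).add (hCm.const_mul r)
  have hcover : (⋃ k : ℕ, {θ | L θ 0 + r * C θ ≤ k}) = Set.univ :=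
    Set.iUnion_eq_univ_iff.mpr fun θ => exists_nat_ge (L θ 0 + r * C θ)
  obtain ⟨k, hk⟩ := exists_measure_pos_of_not_measure_iUnion_null (μ := ρ0)
    (by rw [hcover]; exact NeZero.ne _)
  refine ⟨_, hF measurableSet_Iic, hk, k + 1, by positivity, ?_⟩
  filter_upwards [hC] with θ ⟨hC0, hClip⟩ hθ y hy
  have h0 : ‖(0 : Obs d)‖ < r := by rwa [norm_zero]
  have hy0 := (abs_le.mp (hClip y 0 hy h0)).2
  rw [sub_zero] at hy0
  have : C θ * ‖y‖ ≤ r * C θ := by nlinarith [norm_nonneg y]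
  have : L θ 0 + r * C θ ≤ k := hθ
  linarith

lemma exists_le_partition [IsFiniteMeasure ρ0] [NeZero ρ0] (hL : Assumption1 ρ0 P L)
    (hr : 0 < r) :
    ∃ δ > 0, ∃ B > 0, ∀ (n : ℕ) (W : ℝ), 0 ≤ W → ∀ ys : Fin n → Obs d, (∀ i, ‖ys i‖ < r) →
      δ * exp (-(B * n * W)) ≤ partition ρ0 L ys W := by
  obtain ⟨E, hE, hE0, B, hB, hLB⟩ := hL.exists_pos_measure_loss_le hr
  refine ⟨ρ0.real E, ENNReal.toReal_pos hE0.ne' (measure_ne_top _ _), B, hB,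
    fun n W hW ys hys => ?_⟩
  rw [partition_eq_integral]
  refine measureReal_mul_exp_neg_le_integral_exp_neg
    (integrable_exp_neg_of_nonneg ((hL.measurable_sum ys).const_mul W)
      fun θ => mul_nonneg hW (Finset.sum_nonneg fun i _ => hL.nonneg θ (ys i)))
    hE (hLB.mono fun θ hθ hθE => ?_)
  calc W * ∑ i, L θ (ys i) ≤ W * ∑ _i : Fin n, B :=
        mul_le_mul_of_nonneg_left (Finset.sum_le_sum fun i _ => hθ hθE _ (hys i)) hW
    _ = B * n * W := by
        rw [Finset.sum_const, Finset.card_univ, Fintype.card_fin, nsmul_eq_mul]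
        ring

theorem hellingerSq_gibbs_le [IsFiniteMeasure ρ0] [NeZero ρ0] {n : ℕ} (hL : Assumption1 ρ0 P L)
    {C : Par p → ℝ} (hCi : Integrable C ρ0)
    (hC : ∀ᵐ θ ∂ρ0, ∀ y₁ y₂, ‖y₁‖ < r → ‖y₂‖ < r → |L θ y₁ - L θ y₂| ≤ C θ * ‖y₁ - y₂‖)
    {W : ℝ} (hW : 0 ≤ W) {ys₁ ys₂ : Fin n → Obs d} (hy₁ : ∀ i, ‖ys₁ i‖ < r)
    (hy₂ : ∀ i, ‖ys₂ i‖ < r) :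
    hellingerSq (gibbs ρ0 L ys₁ W) (gibbs ρ0 L ys₂ W)
      ≤ 1 - exp (-(W * (∑ i, ‖ys₁ i - ys₂ i‖) * (∫ θ, C θ ∂ρ0) / partition ρ0 L ys₁ W)) := by
  have hu (ys : Fin n → Obs d) : Measurable fun θ => W * ∑ i, L θ (ys i) :=
    (hL.measurable_sum ys).const_mul W
  have hu0 (ys : Fin n → Obs d) (θ : Par p) : 0 ≤ W * ∑ i, L θ (ys i) :=
    mul_nonneg hW (Finset.sum_nonneg fun i _ => hL.nonneg θ (ys i))
  have hdiff : ∀ᵐ θ ∂ρ0, |W * ∑ i, L θ (ys₁ i) - W * ∑ i, L θ (ys₂ i)|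
      ≤ W * (∑ i, ‖ys₁ i - ys₂ i‖) * C θ := hC.mono fun θ hθ => by
    rw [← mul_sub, abs_mul, abs_of_nonneg hW, mul_assoc, mul_comm (∑ i, _)]
    exact mul_le_mul_of_nonneg_left (abs_sum_sub_sum_le_mul_sum hθ hy₁ hy₂) hW
  rw [gibbs_eq_withDensity_gibbsDensity, gibbs_eq_withDensity_gibbsDensity, partition_eq_integral,
    ← integral_const_mul]
  exact hellingerSq_withDensity_gibbsDensity_le (hu ys₁) (hu0 ys₁) (hu ys₂) (hu0 ys₂)
    (hCi.const_mul _) hdiff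

end Assumption1

theorem gibbs_stability_hellinger_general
    {p d : ℕ}
    (ρ0 : Measure (Par p)) (P : Measure (Obs d))
    [IsProbabilityMeasure ρ0]
    (L : Par p → Obs d → ℝ)
    (hL : Assumption1 ρ0 P L)
    (r : ℝ) (hr : 0 < r) :
    ∃ a > (0 : ℝ), ∃ b > (0 : ℝ),
      ∀ (n : ℕ) (W : ℝ), 0 < W →
        ∀ ys1 ys2 : Fin n → Obs d,
          (∀ i, ‖ys1 i‖ < r) → (∀ i, ‖ys2 i‖ < r) →
          hellingerSq (gibbs ρ0 L ys1 W) (gibbs ρ0 L ys2 W)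
            ≤ Real.sqrt (1 - Real.exp
                (-(a * W * (1 + Real.exp (b * n * W)) ^ 2 * ∑ i, ‖ys1 i - ys2 i‖))) := by
  obtain ⟨C, -, hCi, hC⟩ := hL.exists_integrable_lipschitz_data hr
  obtain ⟨δ, hδ, B, hB, hZ⟩ := hL.exists_le_partition hr
  have hCb : 0 ≤ ∫ θ, C θ ∂ρ0 := integral_nonneg_of_ae (hC.mono fun θ hθ => hθ.1)
  refine ⟨2 * (∫ θ, C θ ∂ρ0) / δ + 1, by positivity, B, hB,
    fun n W hW ys1 ys2 hy1 hy2 => ?_⟩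
  set S := ∑ i, ‖ys1 i - ys2 i‖
  set I := ∫ θ, C θ ∂ρ0
  set e := (1 + exp (B * n * W)) ^ 2
  have hS : 0 ≤ S := Finset.sum_nonneg fun i _ => norm_nonneg _
  have hZ₁ := hZ n W hW.le ys1 hy1
  refine (hL.hellingerSq_gibbs_le hCi (hC.mono fun θ hθ => hθ.2) hW.le hy1 hy2).trans
    (one_sub_exp_neg_le_sqrt_one_sub_exp_neg
      (div_nonneg (by positivity) ((by positivity : 0 ≤ δ * exp _).trans hZ₁)) ?_)
  calc 2 * (W * S * I / partition ρ0 L ys1 W) ≤ 2 * (W * S * I * e / δ) :=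
        mul_le_mul_of_nonneg_left (div_le_mul_one_add_exp_sq_div hδ (by positivity) hZ₁)
          two_pos.le
    _ ≤ 2 * (W * S * I * e / δ) + W * e * S := le_add_of_nonneg_right (by positivity)
    _ = (2 * I / δ + 1) * W * e * S := by ring

/-- Theorem 1, Hellinger part: stability of Gibbs posteriors in the data,
in squared Hellinger distance:
`d_H²(ρ̂₁, ρ̂₂) ≤ sqrt(1 − exp(−a W (1 + e^{bnW})² ∑ᵢ ‖y_{1,i} − y_{2,i}‖))`. -/
theorem gibbs_stability_hellinger
    {p d : ℕ}
    (ρ0 : Measure (Par p)) (P : Measure (Obs d))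
    [IsProbabilityMeasure ρ0] [IsProbabilityMeasure P]
    (L : Par p → Obs d → ℝ) (f : Par p → ℝ)
    (hL : Assumption1 ρ0 P L) (hprior : Assumption2 ρ0 f)
    (r : ℝ) (hr : 0 < r) :
    ∃ a > (0 : ℝ), ∃ b > (0 : ℝ),
      ∀ (n : ℕ) (W : ℝ), 0 < W →
        ∀ ys1 ys2 : Fin n → Obs d,
          (∀ i, ‖ys1 i‖ < r) → (∀ i, ‖ys2 i‖ < r) →
          hellingerSq (gibbs ρ0 L ys1 W) (gibbs ρ0 L ys2 W)
            ≤ Real.sqrt (1 - Real.exp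
                (-(a * W * (1 + Real.exp (b * n * W)) ^ 2 * ∑ i, ‖ys1 i - ys2 i‖))) :=
  gibbs_stability_hellinger_general ρ0 P L hL r hr
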